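/- Let v ∈ ℝ^p be an s-sparse vector (s ≥ 1) and let K(v) = cone{y − v : y ∈ ℝ^p, ‖y‖₁ ≤ ‖v‖₁}. Then the squared Gaussian width of K(v) ∩ B₂^p satisfies ℓ(K(v) ∩ B₂^p)² ≤ 2s·ln(ep/s). -/

import Mathlib

open MeasureTheory ProbabilityTheory

noncomputable section

def l1 {n : ℕ} (v : Fin n → ℝ) : ℝ := ∑ i, |v i|

def l2 {n : ℕ} (v : Fin n → ℝ) : ℝ := Real.sqrt (∑ i, (v i) ^ 2)

def dot {n : ℕ} (u v : Fin n → ℝ) : ℝ := ∑ i, u i * v i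

def stdGaussian (n : ℕ) : Measure (Fin n → ℝ) :=
  Measure.pi (fun _ => gaussianReal 0 1)

/-- Gaussian width of a subset of `ℝ^p`. -/
def gaussWidth {p : ℕ} (T : Set (Fin p → ℝ)) : ℝ :=
  ∫ g, (⨆ x ∈ T, dot x g) ∂(stdGaussian p)

def coneHull {d : ℕ} (S : Set (Fin d → ℝ)) : Set (Fin d → ℝ) :=
  {w | ∃ (k : ℕ) (t : Fin k → ℝ) (z : Fin k → (Fin d → ℝ)),
    (∀ i, 0 ≤ t i) ∧ (∀ i, z i ∈ S) ∧ w = ∑ i, t i • z i}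

/-!
For `τ ≥ 0`, any `u` with `‖u‖_∞ ≤ τ` and `u_j = τ sign v_j` on the support of `v` lies in
`τ ∂‖v‖₁`, so `⟨x, u⟩ ≤ 0` on the descent cone `K(v)` and `⟨x, g⟩ ≤ ‖g - u‖₂` on `K(v) ∩ B₂`.
Choosing `u` coordinatewise closest to `g` and applying Jensen,
`ℓ² ≤ E ‖g - u‖₂² ≤ s (1 + τ²) + p E (|γ| - τ)₊² ≤ s (1 + τ²) + p e^{-τ²/2}` with `γ` standard
normal; the Gaussian tail bound comes from `t² ≥ τ² + (|t| - τ)²` for `|t| ≥ τ`.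
The choice `τ² = 2 log (p / s)` turns the right-hand side into `2 s log (e p / s)`.
-/

lemma integral_sq_eq_variance_add_sq {Ω : Type*} [MeasurableSpace Ω] {μ : Measure Ω}
    [IsProbabilityMeasure μ] {X : Ω → ℝ} (hX : MemLp X 2 μ) :
    ∫ ω, X ω ^ 2 ∂μ = Var[X; μ] + (∫ ω, X ω ∂μ) ^ 2 := by
  rw [variance_eq_sub hX]
  simp only [Pi.pow_apply, sub_add_cancel]

lemma sq_integral_le_integral_sq {Ω : Type*} [MeasurableSpace Ω] {μ : Measure Ω}
    [IsProbabilityMeasure μ] {X : Ω → ℝ} (hX : MemLp X 2 μ) :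
    (∫ ω, X ω ∂μ) ^ 2 ≤ ∫ ω, X ω ^ 2 ∂μ := by
  rw [integral_sq_eq_variance_add_sq hX]
  linarith [variance_nonneg X μ]

lemma integral_sub_sq_gaussianReal (a : ℝ) :
    ∫ t, (t - a) ^ 2 ∂gaussianReal 0 1 = 1 + a ^ 2 := by
  have hX : MemLp (fun t : ℝ => t - a) 2 (gaussianReal 0 1) :=
    (memLp_id_gaussianReal 2).sub (memLp_const a)
  rw [integral_sq_eq_variance_add_sq hX,
    variance_sub_const (X := fun t => t) aestronglyMeasurable_id,
    integral_sub (f := fun t => t) ((memLp_id_gaussianReal 1).integrable le_rfl)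
      (integrable_const a)]
  simp

lemma integral_sq_gaussianPDFReal : ∫ t, t ^ 2 * gaussianPDFReal 0 1 t = 1 := by
  have h := integral_sub_sq_gaussianReal 0
  rw [integral_gaussianReal_eq_integral_smul one_ne_zero] at h
  simpa [mul_comm] using h

lemma gaussianPDFReal_le_exp_mul {τ t : ℝ} (hτ : 0 ≤ τ) (ht : τ ≤ |t|) :
    gaussianPDFReal 0 1 t ≤ Real.exp (-(τ ^ 2 / 2)) * gaussianPDFReal 0 1 (|t| - τ) := by
  simp only [gaussianPDFReal, sub_zero, NNReal.coe_one, mul_one]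
  rw [mul_left_comm, ← Real.exp_add]
  gcongr
  nlinarith [sq_abs t]

lemma integral_comp_abs_sub {f : ℝ → ℝ} (hf : ∀ y ≤ 0, f y = 0) {τ : ℝ} (hτ : 0 ≤ τ) :
    ∫ t, f (|t| - τ) = 2 * ∫ y, f y := by
  rw [integral_comp_abs (f := fun t => f (t - τ)),
    setIntegral_eq_integral_of_forall_compl_eq_zero fun t ht => hf _ ?_,
    integral_sub_right_eq_self f τ]
  linarith [Set.notMem_Ioi.mp ht]

lemma MeasureTheory.Integrable.comp_abs_sub {f : ℝ → ℝ} (hf : Integrable f)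
    (hf0 : ∀ y ≤ 0, f y = 0) {τ : ℝ} (hτ : 0 ≤ τ) : Integrable fun t => f (|t| - τ) := by
  have hsplit : (fun t => f (|t| - τ)) = fun t => f (t - τ) + f (-t - τ) := by
    ext t
    rcases le_total 0 t with ht | ht
    · rw [abs_of_nonneg ht, hf0 (-t - τ) (by linarith), add_zero]
    · rw [abs_of_nonpos ht, hf0 (t - τ) (by linarith), zero_add]
  rw [hsplit]
  exact (hf.comp_sub_right τ).add (hf.comp_sub_right τ).comp_neg

def posPartSqPDF (y : ℝ) : ℝ := max y 0 ^ 2 * gaussianPDFReal 0 1 y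

lemma posPartSqPDF_of_nonpos {y : ℝ} (hy : y ≤ 0) : posPartSqPDF y = 0 := by
  simp [posPartSqPDF, max_eq_right hy]

lemma posPartSqPDF_abs (t : ℝ) : posPartSqPDF |t| = t ^ 2 * gaussianPDFReal 0 1 t := by
  simp [posPartSqPDF, gaussianPDFReal, sq_abs]

lemma integrable_posPartSqPDF : Integrable posPartSqPDF := by
  have hsq : Integrable fun t => t ^ 2 * gaussianPDFReal 0 1 t :=
    .of_integral_ne_zero (by rw [integral_sq_gaussianPDFReal]; exact one_ne_zero)
  refine hsq.mono' (by unfold posPartSqPDF; fun_prop) (ae_of_all _ fun y => ?_)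
  have hpdf := gaussianPDFReal_nonneg 0 1 y
  rw [Real.norm_of_nonneg (by unfold posPartSqPDF; positivity), posPartSqPDF]
  have hmax : max y 0 ^ 2 ≤ y ^ 2 := by
    rw [← sq_abs y]
    exact pow_le_pow_left₀ (le_max_right _ _) (max_le (le_abs_self y) (abs_nonneg y)) 2
  exact mul_le_mul_of_nonneg_right hmax hpdf

lemma integral_posPartSqPDF_abs_sub {τ : ℝ} (hτ : 0 ≤ τ) :
    ∫ t, posPartSqPDF (|t| - τ) = 1 := by
  have hf0 : ∀ y ≤ 0, posPartSqPDF y = 0 := fun _ => posPartSqPDF_of_nonpos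
  rw [integral_comp_abs_sub hf0 hτ, ← integral_comp_abs_sub hf0 le_rfl]
  simp only [sub_zero, posPartSqPDF_abs, integral_sq_gaussianPDFReal]

lemma integral_sq_posPart_abs_sub_le {τ : ℝ} (hτ : 0 ≤ τ) :
    ∫ t, max (|t| - τ) 0 ^ 2 ∂gaussianReal 0 1 ≤ Real.exp (-(τ ^ 2 / 2)) := by
  rw [integral_gaussianReal_eq_integral_smul one_ne_zero]
  calc ∫ t, gaussianPDFReal 0 1 t • max (|t| - τ) 0 ^ 2
      ≤ ∫ t, Real.exp (-(τ ^ 2 / 2)) * posPartSqPDF (|t| - τ) := by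
        refine integral_mono_of_nonneg (ae_of_all _ fun t => ?_)
          ((integrable_posPartSqPDF.comp_abs_sub (fun _ => posPartSqPDF_of_nonpos) hτ).const_mul _)
          (ae_of_all _ fun t => ?_)
        · have := gaussianPDFReal_nonneg 0 1 t
          simp only [smul_eq_mul, Pi.zero_apply]
          positivity
        · simp only [smul_eq_mul, posPartSqPDF]
          rcases le_total |t| τ with ht | ht
          · simp [max_eq_right (sub_nonpos.mpr ht)]
          · rw [mul_comm, ← mul_assoc, mul_comm _ (max _ _ ^ 2), mul_assoc]
            gcongr
            exact gaussianPDFReal_le_exp_mul hτ ht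
    _ = Real.exp (-(τ ^ 2 / 2)) := by
        rw [integral_const_mul, integral_posPartSqPDF_abs_sub hτ, mul_one]

section Geometry

variable {p : ℕ}

lemma dot_eq_dotProduct (x y : Fin p → ℝ) : dot x y = x ⬝ᵥ y := rfl

lemma dot_le_l2_mul_l2 (x y : Fin p → ℝ) : dot x y ≤ l2 x * l2 y :=
  Real.sum_mul_le_sqrt_mul_sqrt _ _ _

lemma dot_le_mul_l1 {τ : ℝ} {u : Fin p → ℝ} (hu : ∀ j, |u j| ≤ τ) (y : Fin p → ℝ) :
    dot y u ≤ τ * l1 y := by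
  rw [dot, l1, Finset.mul_sum]
  refine Finset.sum_le_sum fun j _ => ?_
  calc y j * u j ≤ |y j| * |u j| := (le_abs_self _).trans (abs_mul _ _).le
    _ ≤ τ * |y j| := by rw [mul_comm]; exact mul_le_mul_of_nonneg_right (hu j) (abs_nonneg _)

lemma dot_nonpos_of_mem_coneHull {S : Set (Fin p → ℝ)} {u x : Fin p → ℝ}
    (hS : ∀ z ∈ S, dot z u ≤ 0) (hx : x ∈ coneHull S) : dot x u ≤ 0 := by
  obtain ⟨k, t, z, ht, hz, rfl⟩ := hx
  simp only [dot_eq_dotProduct, sum_dotProduct, smul_dotProduct, smul_eq_mul]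
  exact Finset.sum_nonpos fun i _ => mul_nonpos_of_nonneg_of_nonpos (ht i) (hS _ (hz i))

/-- The hypotheses on `u` say `u ∈ τ ∂‖v‖₁`, which puts `u` in the polar of the descent cone. -/
lemma dot_le_l2_sub_of_subgradient {v u x : Fin p → ℝ} {τ : ℝ} (hτ : 0 ≤ τ)
    (hu : ∀ j, |u j| ≤ τ) (hvu : dot v u = τ * l1 v)
    (hx : x ∈ coneHull {w | ∃ y : Fin p → ℝ, l1 y ≤ l1 v ∧ w = y - v}) (hx2 : l2 x ≤ 1)
    (g : Fin p → ℝ) : dot x g ≤ l2 (g - u) := by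
  have hpolar : dot x u ≤ 0 := by
    refine dot_nonpos_of_mem_coneHull ?_ hx
    rintro _ ⟨y, hy, rfl⟩
    rw [dot_eq_dotProduct, sub_dotProduct, ← dot_eq_dotProduct, ← dot_eq_dotProduct, hvu]
    nlinarith [dot_le_mul_l1 hu y]
  have hsplit : dot x g = dot x (g - u) + dot x u := by
    simp only [dot_eq_dotProduct, dotProduct_sub, sub_add_cancel]
  have hcs := dot_le_l2_mul_l2 x (g - u)
  have hl2 : 0 ≤ l2 (g - u) := Real.sqrt_nonneg _
  nlinarith

lemma zero_mem_coneHull (S : Set (Fin p → ℝ)) : 0 ∈ coneHull S :=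
  ⟨0, Fin.elim0, Fin.elim0, fun i => i.elim0, fun i => i.elim0, by simp⟩

end Geometry

section DualCertificate

variable {p : ℕ} (v : Fin p → ℝ) {τ : ℝ}

/-- Coordinate `j` of the element of `τ ∂‖v‖₁` closest to a point whose `j`-th coordinate is `t`. -/
def dualCoord (τ : ℝ) (j : Fin p) (t : ℝ) : ℝ :=
  if v j = 0 then max (-τ) (min τ t) else τ * SignType.sign (v j)

lemma abs_dualCoord_le (hτ : 0 ≤ τ) (j : Fin p) (t : ℝ) : |dualCoord v τ j t| ≤ τ := by
  unfold dualCoord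
  split_ifs
  · exact abs_le.mpr ⟨le_max_left _ _, max_le (by linarith) (min_le_left _ _)⟩
  · rw [abs_mul, abs_of_nonneg hτ]
    rcases SignType.sign (v j) with _ | _ | _ <;> simp [hτ]

lemma mul_dualCoord (j : Fin p) (t : ℝ) : v j * dualCoord v τ j t = τ * |v j| := by
  unfold dualCoord
  split_ifs with h
  · simp [h]
  · rw [mul_left_comm, self_mul_sign]

lemma sub_clamp_sq (hτ : 0 ≤ τ) (t : ℝ) :
    (t - max (-τ) (min τ t)) ^ 2 = max (|t| - τ) 0 ^ 2 := by
  rcases le_total t (-τ) with h | h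
  · rw [max_eq_left ((min_le_right τ t).trans h), abs_of_nonpos (by linarith),
      max_eq_left (by linarith)]
    ring
  rcases le_total τ t with h' | h'
  · rw [min_eq_left h', max_eq_right (by linarith), abs_of_nonneg (by linarith),
      max_eq_left (by linarith)]
  · rw [min_eq_right h', max_eq_right h, max_eq_right (by linarith [abs_le.mpr ⟨h, h'⟩])]
    ring

lemma measurable_dualCoord (τ : ℝ) (j : Fin p) : Measurable (dualCoord v τ j) := by
  unfold dualCoord
  split_ifs <;> fun_prop

lemma memLp_sub_dualCoord (hτ : 0 ≤ τ) (j : Fin p) :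
    MemLp (fun t => t - dualCoord v τ j t) 2 (gaussianReal 0 1) :=
  (memLp_id_gaussianReal 2).sub <|
    MemLp.of_bound (measurable_dualCoord v τ j).aestronglyMeasurable τ
      (ae_of_all _ fun t => (Real.norm_eq_abs _).trans_le (abs_dualCoord_le v hτ j t))

lemma integral_sub_dualCoord_sq_le (hτ : 0 ≤ τ) (j : Fin p) :
    ∫ t, (t - dualCoord v τ j t) ^ 2 ∂gaussianReal 0 1 ≤
      if v j = 0 then Real.exp (-(τ ^ 2 / 2)) else 1 + τ ^ 2 := by
  unfold dualCoord
  split_ifs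
  · simp_rw [sub_clamp_sq hτ]
    exact integral_sq_posPart_abs_sub_le hτ
  · have hc : |τ * (SignType.sign (v j) : ℝ)| ≤ τ := by
      simpa [dualCoord, *] using abs_dualCoord_le v hτ j 0
    rw [integral_sub_sq_gaussianReal, ← sq_abs (τ * _)]
    gcongr

lemma dot_dualCoord (g : Fin p → ℝ) : dot v (fun j => dualCoord v τ j (g j)) = τ * l1 v := by
  simp only [dot, l1, Finset.mul_sum, mul_dualCoord]

end DualCertificate

instance isProbabilityMeasure_stdGaussian (n : ℕ) : IsProbabilityMeasure (stdGaussian n) := by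
  unfold _root_.stdGaussian; infer_instance

lemma sq_integral_iSup_dot_le {p : ℕ} {μ : Measure (Fin p → ℝ)} [IsProbabilityMeasure μ]
    {T : Set (Fin p → ℝ)} (h0 : 0 ∈ T) {F : (Fin p → ℝ) → ℝ} (hF : MemLp F 2 μ)
    (hle : ∀ g, ∀ x ∈ T, dot x g ≤ F g) :
    (∫ g, ⨆ x ∈ T, dot x g ∂μ) ^ 2 ≤ ∫ g, F g ^ 2 ∂μ := by
  have hF0 : ∀ g, 0 ≤ F g := fun g => by simpa [dot] using hle g 0 h0
  have hsup_le : ∀ g, ⨆ x ∈ T, dot x g ≤ F g := fun g =>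
    Real.iSup_le (fun x => Real.iSup_le (hle g x) (hF0 g)) (hF0 g)
  have hsup_nonneg : ∀ g, 0 ≤ ⨆ x ∈ T, dot x g := fun g => by
    have hbdd : BddAbove (Set.range fun x => ⨆ _ : x ∈ T, dot x g) :=
      ⟨F g, by rintro _ ⟨x, rfl⟩; exact Real.iSup_le (hle g x) (hF0 g)⟩
    refine le_ciSup_of_le hbdd 0 ?_
    simp [ciSup_pos h0, dot]
  calc (∫ g, ⨆ x ∈ T, dot x g ∂μ) ^ 2 ≤ (∫ g, F g ∂μ) ^ 2 :=
        pow_le_pow_left₀ (integral_nonneg hsup_nonneg) (integral_mono_of_nonneg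
          (ae_of_all _ hsup_nonneg) (hF.integrable one_le_two) (ae_of_all _ hsup_le)) 2
    _ ≤ ∫ g, F g ^ 2 ∂μ := sq_integral_le_integral_sq hF

lemma integrable_sub_dualCoord_sq_comp_eval {p : ℕ} (v : Fin p → ℝ) {τ : ℝ} (hτ : 0 ≤ τ)
    (j : Fin p) :
    Integrable (fun g : Fin p → ℝ => (g j - dualCoord v τ j (g j)) ^ 2) (stdGaussian p) :=
  integrable_comp_eval (μ := fun _ => gaussianReal 0 1) (memLp_sub_dualCoord v hτ j).integrable_sq

lemma integral_sum_sub_dualCoord_sq_le {p s : ℕ} {v : Fin p → ℝ}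
    (hsparse : (Finset.univ.filter (fun i => v i ≠ 0)).card ≤ s) {τ : ℝ} (hτ : 0 ≤ τ) :
    ∫ g, ∑ j, (g j - dualCoord v τ j (g j)) ^ 2 ∂stdGaussian p ≤
      s * (1 + τ ^ 2) + p * Real.exp (-(τ ^ 2 / 2)) := by
  rw [integral_finsetSum _ fun j _ => integrable_sub_dualCoord_sq_comp_eval v hτ j]
  calc ∑ j, ∫ g, (g j - dualCoord v τ j (g j)) ^ 2 ∂stdGaussian p
      = ∑ j, ∫ t, (t - dualCoord v τ j t) ^ 2 ∂gaussianReal 0 1 :=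
        Finset.sum_congr rfl fun j _ => integral_comp_eval (μ := fun _ => gaussianReal 0 1)
          (memLp_sub_dualCoord v hτ j).integrable_sq.1
    _ ≤ ∑ j, if v j = 0 then Real.exp (-(τ ^ 2 / 2)) else 1 + τ ^ 2 :=
        Finset.sum_le_sum fun j _ => integral_sub_dualCoord_sq_le v hτ j
    _ ≤ s * (1 + τ ^ 2) + p * Real.exp (-(τ ^ 2 / 2)) := by
        rw [Finset.sum_ite, Finset.sum_const, Finset.sum_const, nsmul_eq_mul, nsmul_eq_mul,
          add_comm]
        have hoff : ((Finset.univ.filter fun j => v j = 0).card : ℝ) ≤ p := by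
          exact_mod_cast (Finset.card_filter_le _ _).trans (Finset.card_fin p).le
        have hon : ((Finset.univ.filter fun j => ¬v j = 0).card : ℝ) ≤ s := by
          exact_mod_cast hsparse
        gcongr

lemma gaussWidth_descentCone_inter_ball_sq_le {p s : ℕ} {v : Fin p → ℝ}
    (hsparse : (Finset.univ.filter (fun i => v i ≠ 0)).card ≤ s) {τ : ℝ} (hτ : 0 ≤ τ) :
    gaussWidth (coneHull {w | ∃ y : Fin p → ℝ, l1 y ≤ l1 v ∧ w = y - v} ∩ {x | l2 x ≤ 1}) ^ 2 ≤
      s * (1 + τ ^ 2) + p * Real.exp (-(τ ^ 2 / 2)) := by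
  set G := fun g : Fin p → ℝ => ∑ j, (g j - dualCoord v τ j (g j)) ^ 2
  have hG0 : ∀ g, 0 ≤ G g := fun g => Finset.sum_nonneg fun j _ => sq_nonneg _
  have hGint : Integrable G (stdGaussian p) :=
    integrable_finsetSum _ fun j _ => integrable_sub_dualCoord_sq_comp_eval v hτ j
  have hF : MemLp (fun g => Real.sqrt (G g)) 2 (stdGaussian p) :=
    (memLp_two_iff_integrable_sq (Real.continuous_sqrt.comp_aestronglyMeasurable hGint.1)).mpr
      (hGint.congr (ae_of_all _ fun g => (Real.sq_sqrt (hG0 g)).symm))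
  set K := coneHull {w | ∃ y : Fin p → ℝ, l1 y ≤ l1 v ∧ w = y - v}
  calc gaussWidth (K ∩ {x | l2 x ≤ 1}) ^ 2 ≤ ∫ g, Real.sqrt (G g) ^ 2 ∂stdGaussian p :=
        sq_integral_iSup_dot_le (Set.mem_inter (zero_mem_coneHull _) (by simp [l2])) hF
          fun g x hx => dot_le_l2_sub_of_subgradient hτ (fun j => abs_dualCoord_le v hτ j _)
            (dot_dualCoord v g) hx.1 hx.2 g
    _ = ∫ g, G g ∂stdGaussian p := by simp only [Real.sq_sqrt (hG0 _)]
    _ ≤ s * (1 + τ ^ 2) + p * Real.exp (-(τ ^ 2 / 2)) := integral_sum_sub_dualCoord_sq_le hsparse hτ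

lemma mul_one_add_sq_add_mul_exp_eq {p s τ : ℝ} (hs : 0 < s) (hsp : s ≤ p)
    (hτ : τ ^ 2 = 2 * Real.log (p / s)) :
    s * (1 + τ ^ 2) + p * Real.exp (-(τ ^ 2 / 2)) = 2 * s * Real.log (Real.exp 1 * p / s) := by
  have hp : 0 < p := hs.trans_le hsp
  have hexp : Real.exp (-(τ ^ 2 / 2)) = s / p := by
    rw [show -(τ ^ 2 / 2) = -Real.log (p / s) by rw [hτ]; ring, Real.exp_neg,
      Real.exp_log (by positivity), inv_div]
  rw [hexp, hτ, mul_div_assoc, Real.log_mul (Real.exp_ne_zero 1) (by positivity), Real.log_exp]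
  field_simp
  ring

theorem gauss_width_of_descent_cone {p s : ℕ} (hs : 1 ≤ s) (hsp : s ≤ p)
    (v : Fin p → ℝ) (hsparse : (Finset.univ.filter (fun i => v i ≠ 0)).card ≤ s) :
    (gaussWidth (coneHull {w | ∃ y : Fin p → ℝ, l1 y ≤ l1 v ∧ w = y - v} ∩
        {x | l2 x ≤ 1})) ^ 2 ≤
      2 * s * Real.log (Real.exp 1 * p / s) := by
  have hs0 : (0 : ℝ) < s := by exact_mod_cast hs
  have hsp' : (s : ℝ) ≤ p := by exact_mod_cast hsp
  have hlog : 0 ≤ Real.log (p / s) := Real.log_nonneg (by rwa [one_le_div hs0])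
  set τ := Real.sqrt (2 * Real.log (p / s))
  have hτsq : τ ^ 2 = 2 * Real.log (p / s) := Real.sq_sqrt (by linarith)
  calc _ ≤ s * (1 + τ ^ 2) + p * Real.exp (-(τ ^ 2 / 2)) :=
        gaussWidth_descentCone_inter_ball_sq_le hsparse (Real.sqrt_nonneg _)
    _ = 2 * s * Real.log (Real.exp 1 * p / s) := mul_one_add_sq_add_mul_exp_eq hs0 hsp' hτsq
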